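/- If an MDP M₁ has an acyclic unlabeled underlying graph, then there exists an MDP M₂ whose unlabeled underlying graph is a tree and which is bisimilar to M₁. -/

import Mathlib

open Classical
attribute [local instance 10] Classical.propDecidable

noncomputable section

universe u v w

/-- A sub-probability measure on a finite set `Q`. -/
structure SubProb (Q : Type u) [Fintype Q] where
  val : Q → ℝ
  nonneg : ∀ q, 0 ≤ val q
  sum_le_one : ∑ q, val q ≤ 1

namespace SubProb

variable {Q : Type u} {Q' : Type v} [Fintype Q] [Fintype Q']

/-- The measure of a set of states. -/
def mass (μ : SubProb Q) (A : Set Q) : ℝ := ∑ q, A.indicator μ.val q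

/-- The zero sub-probability measure. -/
def zero (Q : Type u) [Fintype Q] : SubProb Q :=
  ⟨fun _ => 0, fun _ => le_refl 0, by simp⟩

/-- Extension (by zero) of a sub-probability measure to a disjoint sum (left). -/
def toLeft (μ : SubProb Q) : SubProb (Q ⊕ Q') where
  val := Sum.elim μ.val fun _ => 0
  nonneg := by rintro (q | q); exacts [μ.nonneg q, le_refl 0]
  sum_le_one := by simpa [Fintype.sum_sum_type] using μ.sum_le_one

/-- Extension (by zero) of a sub-probability measure to a disjoint sum (right). -/
def toRight (μ : SubProb Q') : SubProb (Q ⊕ Q') where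
  val := Sum.elim (fun _ => 0) μ.val
  nonneg := by rintro (q | q); exacts [le_refl 0, μ.nonneg q]
  sum_le_one := by simpa [Fintype.sum_sum_type] using μ.sum_le_one

end SubProb

/-- The image of a set under a binary relation. -/
def relImage {A : Type u} {B : Type v} (R : A → B → Prop) (S : Set A) : Set B :=
  {b | ∃ a ∈ S, R a b}

/-- A set is `R`-closed if its image under `R` is itself. -/
def RClosed {Q : Type u} (R : Q → Q → Prop) (A : Set Q) : Prop := relImage R A = A

/-- `μ ≼_R μ'` : `μ'` simulates `μ` with respect to `R`. -/
def SubProb.simLE {Q : Type u} [Fintype Q] (R : Q → Q → Prop) (μ μ' : SubProb Q) : Prop :=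
  ∀ A : Set Q, RClosed R A → μ.mass A ≤ μ'.mass A

/-- `μ ≈_R μ'` : `μ` is equivalent to `μ'` with respect to `R`. -/
def SubProb.simEq {Q : Type u} [Fintype Q] (R : Q → Q → Prop) (μ μ' : SubProb Q) : Prop :=
  ∀ A : Set Q, RClosed R A → μ.mass A = μ'.mass A

/-- A (finite) Markov decision process over atomic propositions `AP`. -/
structure MDP (Q : Type u) [Fintype Q] (AP : Type w) where
  init : Q
  trans : Q → Finset (SubProb Q)
  trans_nonempty : ∀ q, (trans q).Nonempty
  label : Q → Set AP

variable {Q : Type u} {Q' : Type v} {AP : Type w} [Fintype Q] [Fintype Q']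

/-- A simulation relation on (the state space of) an MDP: a preorder such that related
states have the same labels and every transition of the smaller state is simulated. -/
def IsSimulation (M : MDP Q AP) (R : Q → Q → Prop) : Prop :=
  Reflexive R ∧ Transitive R ∧
    ∀ q q', R q q' → M.label q = M.label q' ∧
      ∀ μ ∈ M.trans q, ∃ μ' ∈ M.trans q', SubProb.simLE R μ μ'

/-- A bisimulation on (the state space of) an MDP. -/
def IsBisimulation (M : MDP Q AP) (R : Q → Q → Prop) : Prop :=
  Equivalence R ∧
    ∀ q q', R q q' → M.label q = M.label q' ∧
      ∀ μ ∈ M.trans q, ∃ μ' ∈ M.trans q', SubProb.simEq R μ μ'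

/-- The direct sum of two MDPs (with the initial state of the first as initial state). -/
def MDP.dsum (M : MDP Q AP) (M' : MDP Q' AP) : MDP (Q ⊕ Q') AP where
  init := Sum.inl M.init
  trans := fun x =>
    match x with
    | .inl q => (M.trans q).image SubProb.toLeft
    | .inr q => (M'.trans q).image SubProb.toRight
  trans_nonempty := by
    rintro (q | q)
    · exact (M.trans_nonempty q).image _
    · exact (M'.trans_nonempty q).image _
  label := Sum.elim M.label M'.label

/-- `M ≼ M'` : the MDP `M'` simulates the MDP `M`. -/
def MDP.Sim (M : MDP Q AP) (M' : MDP Q' AP) : Prop :=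
  ∃ R : (Q ⊕ Q') → (Q ⊕ Q') → Prop,
    IsSimulation (M.dsum M') R ∧ R (Sum.inl M.init) (Sum.inr M'.init)

/-- `M ≈ M'` : the MDPs `M` and `M'` are bisimilar. -/
def MDP.Bisim (M : MDP Q AP) (M' : MDP Q' AP) : Prop :=
  ∃ R : (Q ⊕ Q') → (Q ⊕ Q') → Prop,
    IsBisimulation (M.dsum M') R ∧ R (Sum.inl M.init) (Sum.inr M'.init)

/-- The canonical-form relation `id_Q ∪ R₁ ∪ id_{Q'}` on a disjoint sum. -/
def canonRel (R₁ : Q → Q' → Prop) : (Q ⊕ Q') → (Q ⊕ Q') → Prop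
  | .inl a, .inl b => a = b
  | .inl a, .inr b => R₁ a b
  | .inr _, .inl _ => False
  | .inr a, .inr b => a = b

/-- `R₁ ⊆ Q × Q'` is a canonical simulation of `M` by `M'`. -/
def IsCanonSim (M : MDP Q AP) (M' : MDP Q' AP) (R₁ : Q → Q' → Prop) : Prop :=
  IsSimulation (M.dsum M') (canonRel R₁)

/-- The edge relation of the unlabeled underlying graph of an MDP. -/
def MDP.edge (M : MDP Q AP) (q₁ q₂ : Q) : Prop :=
  ∃ μ ∈ M.trans q₁, 0 < μ.val q₂

/-- A sub-probability measure on `Q` viewed as a measure on `Q × Fin (k+1)`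
concentrated on level `j`. -/
def SubProb.toLevel {k : ℕ} (μ : SubProb Q) (j : Fin (k + 1)) : SubProb (Q × Fin (k + 1)) where
  val := fun x => if x.2 = j then μ.val x.1 else 0
  nonneg := by
    intro x; (try dsimp only); split
    · exact μ.nonneg x.1
    · exact le_refl 0
  sum_le_one := by
    rw [Fintype.sum_prod_type]
    simpa using μ.sum_le_one

/-- The `k`-th unrolling of an MDP rooted at `q`. States at level `j+1` transition to the
corresponding states at level `j`; states at level `0` have only the zero transition. -/
def MDP.unroll (M : MDP Q AP) (q : Q) (k : ℕ) : MDP (Q × Fin (k + 1)) AP where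
  init := (q, Fin.last k)
  trans := fun x =>
    if h : (x.2 : ℕ) = 0 then {SubProb.zero _}
    else (M.trans x.1).image fun μ =>
      μ.toLevel ⟨(x.2 : ℕ) - 1, Nat.lt_of_le_of_lt (Nat.sub_le _ _) x.2.isLt⟩
  trans_nonempty := by
    intro x; (try dsimp only); split
    · simp
    · exact (M.trans_nonempty x.1).image _
  label := fun x => M.label x.1
mutual
/-- The safety fragment of PCTL. -/
inductive SafeF (AP : Type w) : Type w
  | tt : SafeF AP
  | ff : SafeF AP
  | atom : AP → SafeF AP
  | natom : AP → SafeF AP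
  | and : SafeF AP → SafeF AP → SafeF AP
  | or : SafeF AP → SafeF AP → SafeF AP
  | pnextLt : (p : ℚ) → 0 ≤ p → p ≤ 1 → LiveF AP → SafeF AP
  | pnextLe : (p : ℚ) → 0 ≤ p → p ≤ 1 → LiveF AP → SafeF AP
  | puntilLt : (p : ℚ) → 0 ≤ p → p ≤ 1 → LiveF AP → LiveF AP → SafeF AP
  | puntilLe : (p : ℚ) → 0 ≤ p → p ≤ 1 → LiveF AP → LiveF AP → SafeF AP

/-- The liveness fragment of PCTL. -/
inductive LiveF (AP : Type w) : Type w
  | tt : LiveF AP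
  | ff : LiveF AP
  | atom : AP → LiveF AP
  | natom : AP → LiveF AP
  | and : LiveF AP → LiveF AP → LiveF AP
  | or : LiveF AP → LiveF AP → LiveF AP
  | nnextLt : (p : ℚ) → 0 ≤ p → p ≤ 1 → LiveF AP → LiveF AP
  | nnextLe : (p : ℚ) → 0 ≤ p → p ≤ 1 → LiveF AP → LiveF AP
  | nuntilLt : (p : ℚ) → 0 ≤ p → p ≤ 1 → LiveF AP → LiveF AP → LiveF AP
  | nuntilLe : (p : ℚ) → 0 ≤ p → p ≤ 1 → LiveF AP → LiveF AP → LiveF AP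
end

/-- A (history-dependent) scheduler for an MDP. -/
structure Sched (M : MDP Q AP) where
  choice : List Q → Q → SubProb Q
  valid : ∀ h q, choice h q ∈ M.trans q

/-- The probability, under scheduler `σ` with current history `h`, that an until property
`s1 U s2` is satisfied from `q` within `n` steps. -/
def untilProbN (M : MDP Q AP) (σ : Sched M) (s1 s2 : Set Q) : ℕ → List Q → Q → ℝ
  | 0, _, q => if q ∈ s2 then 1 else 0
  | n + 1, h, q =>
    if q ∈ s2 then 1
    else if q ∈ s1 then
      ∑ q', (σ.choice h q).val q' * untilProbN M σ s1 s2 n (h ++ [q]) q'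
    else 0

/-- The probability under scheduler `σ` that `s1 U s2` is satisfied from `q`. -/
def untilProb (M : MDP Q AP) (σ : Sched M) (s1 s2 : Set Q) (q : Q) : ℝ :=
  ⨆ n : ℕ, untilProbN M σ s1 s2 n [] q

mutual
/-- Satisfaction of safety formulas at a state of an MDP (under all schedulers). -/
def satS (M : MDP Q AP) : SafeF AP → Q → Prop
  | .tt, _ => True
  | .ff, _ => False
  | .atom a, q => a ∈ M.label q
  | .natom a, q => a ∉ M.label q
  | .and φ ψ, q => satS M φ q ∧ satS M ψ q
  | .or φ ψ, q => satS M φ q ∨ satS M ψ q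
  | .pnextLt p _ _ ψ, q => ∀ μ ∈ M.trans q, μ.mass {q' | satL M ψ q'} < (p : ℝ)
  | .pnextLe p _ _ ψ, q => ∀ μ ∈ M.trans q, μ.mass {q' | satL M ψ q'} ≤ (p : ℝ)
  | .puntilLt p _ _ ψ1 ψ2, q =>
    ∀ σ : Sched M, untilProb M σ {q' | satL M ψ1 q'} {q' | satL M ψ2 q'} q < (p : ℝ)
  | .puntilLe p _ _ ψ1 ψ2, q =>
    ∀ σ : Sched M, untilProb M σ {q' | satL M ψ1 q'} {q' | satL M ψ2 q'} q ≤ (p : ℝ)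

/-- Satisfaction of liveness formulas at a state of an MDP. -/
def satL (M : MDP Q AP) : LiveF AP → Q → Prop
  | .tt, _ => True
  | .ff, _ => False
  | .atom a, q => a ∈ M.label q
  | .natom a, q => a ∉ M.label q
  | .and φ ψ, q => satL M φ q ∧ satL M ψ q
  | .or φ ψ, q => satL M φ q ∨ satL M ψ q
  | .nnextLt p _ _ ψ, q => ¬ ∀ μ ∈ M.trans q, μ.mass {q' | satL M ψ q'} < (p : ℝ)
  | .nnextLe p _ _ ψ, q => ¬ ∀ μ ∈ M.trans q, μ.mass {q' | satL M ψ q'} ≤ (p : ℝ)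
  | .nuntilLt p _ _ ψ1 ψ2, q =>
    ¬ ∀ σ : Sched M, untilProb M σ {q' | satL M ψ1 q'} {q' | satL M ψ2 q'} q < (p : ℝ)
  | .nuntilLe p _ _ ψ1 ψ2, q =>
    ¬ ∀ σ : Sched M, untilProb M σ {q' | satL M ψ1 q'} {q' | satL M ψ2 q'} q ≤ (p : ℝ)
end
mutual
/-- Weak safety formulas: safety formulas using only `≤` probability bounds. -/
def SafeF.weak : SafeF AP → Prop
  | .tt => True
  | .ff => True
  | .atom _ => True
  | .natom _ => True
  | .and φ ψ => φ.weak ∧ ψ.weak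
  | .or φ ψ => φ.weak ∧ ψ.weak
  | .pnextLt _ _ _ _ => False
  | .pnextLe _ _ _ ψ => ψ.strict
  | .puntilLt _ _ _ _ _ => False
  | .puntilLe _ _ _ ψ1 ψ2 => ψ1.strict ∧ ψ2.strict

/-- Strict liveness formulas: liveness formulas using only `≤` probability bounds. -/
def LiveF.strict : LiveF AP → Prop
  | .tt => True
  | .ff => True
  | .atom _ => True
  | .natom _ => True
  | .and φ ψ => φ.strict ∧ ψ.strict
  | .or φ ψ => φ.strict ∧ ψ.strict
  | .nnextLt _ _ _ _ => False
  | .nnextLe _ _ _ ψ => ψ.strict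
  | .nuntilLt _ _ _ _ _ => False
  | .nuntilLe _ _ _ ψ1 ψ2 => ψ1.strict ∧ ψ2.strict
end

/-- An equivalence relation is compatible with an MDP if related states have equal labels. -/
def Compatible (M : MDP Q AP) (s : Setoid Q) : Prop :=
  ∀ q q', s.r q q' → M.label q = M.label q'

/-- The lifting of a sub-probability measure to the quotient:
`[μ]([q]) = μ([q])`. -/
def SubProb.lift (s : Setoid Q) (μ : SubProb Q) : SubProb (Quotient s) where
  val := fun a => ∑ q, if Quotient.mk s q = a then μ.val q else 0
  nonneg := by
    intro a
    apply Finset.sum_nonneg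
    intro q _
    split
    · exact μ.nonneg q
    · exact le_refl 0
  sum_le_one := by
    rw [Finset.sum_comm]
    simpa using μ.sum_le_one

/-- The abstract MDP of `M` with respect to an equivalence relation `s`. -/
def MDP.abst (M : MDP Q AP) (s : Setoid Q) : MDP (Quotient s) AP where
  init := Quotient.mk s M.init
  trans := fun a =>
    Finset.univ.biUnion fun q =>
      if Quotient.mk s q = a then (M.trans q).image (SubProb.lift s) else ∅
  trans_nonempty := by
    intro a
    obtain ⟨q, rfl⟩ := Quotient.exists_rep a
    obtain ⟨μ, hμ⟩ := M.trans_nonempty q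
    refine ⟨SubProb.lift s μ, Finset.mem_biUnion.2 ⟨q, Finset.mem_univ q, ?_⟩⟩
    rw [if_pos rfl]
    exact Finset.mem_image_of_mem _ hμ
  label := fun a => M.label a.out

/-- The abstraction relation `{(q, [q])}`. -/
def abstRel (s : Setoid Q) : Q → Quotient s → Prop := fun q a => Quotient.mk s q = a

/-- The refinement relation for `s' ⊆ s`: `[q]_{s'}` is related to `[q]_s` iff
`[q]_{s'} ⊆ [q]_s`, equivalently they share a common element. -/
def refineRel (s' s : Setoid Q) : Quotient s' → Quotient s → Prop := fun a' a =>
  ∃ q : Q, Quotient.mk s' q = a' ∧ Quotient.mk s q = a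

/-- `(E, R)` is a counterexample for the MDP `A` and safety formula `ψ`. -/
def IsCex {QA : Type v} [Fintype QA] (A : MDP QA AP) (ψ : SafeF AP) (E : MDP Q AP)
    (R : Q → QA → Prop) : Prop :=
  ¬ satS E ψ E.init ∧ IsCanonSim E A R

/-- Containment of MDPs (on a common state space): same initial state, same labels, and
each transition set injects into the corresponding one so that each transition agrees with
its image except possibly being zero. -/
def MDPContained (M' M : MDP Q AP) : Prop :=
  M'.init = M.init ∧ (∀ q, M'.label q = M.label q) ∧
    ∀ q, ∃ f : SubProb Q → SubProb Q, Set.InjOn f (M'.trans q) ∧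
      ∀ μ' ∈ M'.trans q, f μ' ∈ M.trans q ∧ ∀ q'', μ'.val q'' = (f μ').val q'' ∨ μ'.val q'' = 0

/-- A minimal counterexample. -/
def MinimalCex {QA : Type v} [Fintype QA] (A : MDP QA AP) (ψ : SafeF AP) (E : MDP Q AP)
    (R₀ : Q → QA → Prop) : Prop :=
  IsCex A ψ E R₀ ∧
    (∀ (E₁ : MDP Q AP) (R₁ : Q → QA → Prop),
      IsCex A ψ E₁ R₁ → MDPContained E₁ E → E₁ = E) ∧
    (∀ R₁ : Q → QA → Prop,
      IsCex A ψ E R₁ → (∀ e a, R₁ e a → R₀ e a) → R₁ = R₀)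

/-- The counterexample `(E, R₀)` for the abstraction `M/s` is valid and consistent with
`(M, s)`: there is a canonical (validating) simulation `R` of `E` by `M` with `α∘R ⊆ R₀`. -/
def ValidConsistent (M : MDP Q AP) (s : Setoid Q) {QE : Type v} [Fintype QE] (E : MDP QE AP)
    (R₀ : QE → Quotient s → Prop) : Prop :=
  ∃ R : QE → Q → Prop, IsCanonSim E M R ∧ ∀ e q, R e q → R₀ e (Quotient.mk s q)

/-- The underlying graph of an MDP is a tree rooted at `r`. -/
def IsTreeGraph {V : Type u} (E : V → V → Prop) (r : V) : Prop :=
  (∀ q, ¬ E q r) ∧ (∀ q, q ≠ r → ∃! p, E p q) ∧ ∀ q, Relation.ReflTransGen E r q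


/-! The bisimilar tree is the unfolding of `M` into its paths from the initial state; acyclicity
makes these paths finitely many, since a path visits no state twice. Sending a path to its last
state is a functional bisimulation: the transitions of a path are those of its last state,
transported to the one-step extensions of the path. -/

attribute [ext] SubProb

namespace SubProb

def map (f : Q → Q') (μ : SubProb Q) : SubProb Q' where
  val y := ∑ x, if f x = y then μ.val x else 0
  nonneg y := Finset.sum_nonneg fun x _ => by split <;> simp [μ.nonneg x]
  sum_le_one := by
    rw [Finset.sum_comm]
    simpa using μ.sum_le_one

theorem mass_map (f : Q → Q') (μ : SubProb Q) (B : Set Q') :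
    (μ.map f).mass B = μ.mass (f ⁻¹' B) := by
  simp only [mass, map, Set.indicator_apply, Set.mem_preimage]
  calc ∑ y, (if y ∈ B then ∑ x, if f x = y then μ.val x else 0 else 0)
      = ∑ y, ∑ x, if f x = y then (if f x ∈ B then μ.val x else 0) else 0 := by
        refine Finset.sum_congr rfl fun y _ => ?_
        split_ifs with hy
        · exact Finset.sum_congr rfl fun x _ => by split_ifs <;> simp_all
        · exact (Finset.sum_eq_zero fun x _ => by split_ifs <;> simp_all).symm
    _ = ∑ x, if f x ∈ B then μ.val x else 0 := by
        rw [Finset.sum_comm]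
        simp

theorem map_val (f : Q → Q') (μ : SubProb Q) (y : Q') :
    (μ.map f).val y = μ.mass (f ⁻¹' {y}) := by
  simp [map, mass, Set.indicator_apply]

theorem map_map {Q'' : Type*} [Fintype Q''] (f : Q → Q') (g : Q' → Q'') (μ : SubProb Q) :
    (μ.map f).map g = μ.map (g ∘ f) := by
  ext z
  rw [map_val, mass_map, ← Set.preimage_comp, ← map_val]

theorem map_congr {f g : Q → Q'} {μ : SubProb Q} (h : ∀ x, μ.val x ≠ 0 → f x = g x) :
    μ.map f = μ.map g := by
  ext y
  refine Finset.sum_congr rfl fun x _ => ?_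
  by_cases hx : μ.val x = 0
  · simp [hx]
  · rw [h x hx]

theorem map_id (μ : SubProb Q) : μ.map id = μ := by
  ext y
  simp [map]

theorem pos_map_iff (f : Q → Q') (μ : SubProb Q) (y : Q') :
    0 < (μ.map f).val y ↔ ∃ x, f x = y ∧ 0 < μ.val x := by
  simp only [map]
  rw [Finset.sum_pos_iff_of_nonneg fun x _ => by split <;> simp [μ.nonneg x]]
  simp only [Finset.mem_univ, true_and]
  refine exists_congr fun x => ?_
  split_ifs with h <;> simp [h]

theorem mass_toLeft (μ : SubProb Q) (A : Set (Q ⊕ Q')) :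
    (toLeft μ : SubProb (Q ⊕ Q')).mass A = μ.mass (Sum.inl ⁻¹' A) := by
  simp [mass, toLeft, Fintype.sum_sum_type, Set.indicator_apply]

theorem mass_toRight (μ : SubProb Q') (A : Set (Q ⊕ Q')) :
    (toRight μ : SubProb (Q ⊕ Q')).mass A = μ.mass (Sum.inr ⁻¹' A) := by
  simp [mass, toRight, Fintype.sum_sum_type, Set.indicator_apply]

end SubProb

theorem RClosed.mem_of_rel {α : Type*} {R : α → α → Prop} {A : Set α} (hA : RClosed R A)
    {a b : α} (ha : a ∈ A) (hab : R a b) : b ∈ A :=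
  hA ▸ ⟨a, ha, hab⟩

namespace MDP

variable {M : MDP Q AP} {N : MDP Q' AP}

theorem simEq_toRight_toLeft_map (f : Q' → Q) (ν : SubProb Q') :
    SubProb.simEq (fun x y => Sum.elim id f x = Sum.elim id f y)
      (SubProb.toRight ν) (SubProb.toLeft (ν.map f)) := by
  intro A hA
  have hpre : Sum.inr ⁻¹' A = f ⁻¹' (Sum.inl ⁻¹' A) :=
    Set.ext fun s => ⟨fun h => hA.mem_of_rel h rfl, fun h => hA.mem_of_rel h rfl⟩
  rw [SubProb.mass_toRight, SubProb.mass_toLeft, SubProb.mass_map, hpre]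

theorem bisim_of_map (f : Q' → Q) (hinit : f N.init = M.init)
    (hlabel : ∀ s, N.label s = M.label (f s))
    (htrans : ∀ s, (N.trans s).image (SubProb.map f) = M.trans (f s)) : M.Bisim N := by
  let g : Q ⊕ Q' → Q := Sum.elim id f
  let R : Q ⊕ Q' → Q ⊕ Q' → Prop := fun x y => g x = g y
  have hforth : ∀ x, ∀ μ ∈ (M.dsum N).trans x,
      ∃ ν ∈ M.trans (g x), SubProb.simEq R μ (SubProb.toLeft ν) := by
    rintro (q | s) μ hμ <;> obtain ⟨ν, hν, rfl⟩ := Finset.mem_image.mp hμ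
    · exact ⟨ν, hν, fun _ _ => rfl⟩
    · exact ⟨ν.map f, htrans s ▸ Finset.mem_image_of_mem _ hν,
        simEq_toRight_toLeft_map f ν⟩
  have hback : ∀ x, ∀ ν ∈ M.trans (g x),
      ∃ μ ∈ (M.dsum N).trans x, SubProb.simEq R μ (SubProb.toLeft ν) := by
    rintro (q | s) ν hν
    · exact ⟨SubProb.toLeft ν, Finset.mem_image_of_mem _ hν, fun _ _ => rfl⟩
    · obtain ⟨ν', hν', rfl⟩ := Finset.mem_image.mp ((htrans s).symm ▸ hν)
      exact ⟨SubProb.toRight ν', Finset.mem_image_of_mem _ hν',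
        simEq_toRight_toLeft_map f ν'⟩
  have hlabel_dsum : ∀ x, (M.dsum N).label x = M.label (g x) := by
    rintro (q | s)
    exacts [rfl, hlabel s]
  refine ⟨R, ⟨⟨fun _ => rfl, Eq.symm, Eq.trans⟩, fun x y hxy => ⟨?_, ?_⟩⟩,
    hinit.symm⟩
  · rw [hlabel_dsum, hlabel_dsum, hxy]
  · intro μ hμ
    obtain ⟨ν, hν, hμν⟩ := hforth x μ hμ
    obtain ⟨μ', hμ', hμ'ν⟩ := hback y ν (hxy ▸ hν)
    exact ⟨μ', hμ', fun A hA => (hμν A hA).trans (hμ'ν A hA).symm⟩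

variable (M)

/- A path from `M.init` is stored as the list of the states after `M.init`, most recent first,
each coded in `Fin (card Q)` so that the type of paths lives in `Type`. -/

def pathLast : List (Fin (Fintype.card Q)) → Q
  | [] => M.init
  | a :: _ => (Fintype.equivFin Q).symm a

def IsPath : List (Fin (Fintype.card Q)) → Prop
  | [] => True
  | a :: l => M.edge (M.pathLast l) ((Fintype.equivFin Q).symm a) ∧ IsPath l

def Path : Type := {l : List (Fin (Fintype.card Q)) // M.IsPath l}

variable {M}

theorem IsPath.reflTransGen_pathLast :
    ∀ {l}, M.IsPath l → ∀ a ∈ l,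
      Relation.ReflTransGen M.edge ((Fintype.equivFin Q).symm a) (M.pathLast l)
  | b :: l, ⟨hedge, hl⟩, a, ha => by
    rcases List.mem_cons.mp ha with rfl | ha
    · exact .refl
    · exact (hl.reflTransGen_pathLast a ha).tail hedge

theorem IsPath.nodup (hacyc : ∀ x : Q, ¬ Relation.TransGen M.edge x x) :
    ∀ {l}, M.IsPath l → l.Nodup
  | [], _ => List.nodup_nil
  | _ :: _, ⟨hedge, hl⟩ =>
    List.nodup_cons.mpr ⟨fun ha => hacyc _ (.tail' (hl.reflTransGen_pathLast _ ha) hedge),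
      hl.nodup hacyc⟩

theorem finite_path (hacyc : ∀ x : Q, ¬ Relation.TransGen M.edge x x) : Finite M.Path :=
  Set.Finite.to_subtype <| (List.finite_length_le _ (Fintype.card Q)).subset fun _ hl => by
    simpa using (IsPath.nodup hacyc hl).length_le_card

namespace Path

def root : M.Path := ⟨[], trivial⟩

def last (p : M.Path) : Q := M.pathLast p.val

/-- Junk value `p` when there is no edge from `p.last` to `q`. -/
def extend (p : M.Path) (q : Q) : M.Path :=
  if h : M.edge p.last q then ⟨Fintype.equivFin Q q :: p.val, by simpa [last] using h, p.2⟩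
  else p

theorem extend_val {p : M.Path} {q : Q} (h : M.edge p.last q) :
    (p.extend q).val = Fintype.equivFin Q q :: p.val := by
  simp [extend, h]

theorem last_extend {p : M.Path} {q : Q} (h : M.edge p.last q) : (p.extend q).last = q := by
  simp [last, extend_val h, pathLast]

end Path

variable (M) [Fintype M.Path]

def treeUnfold : MDP M.Path AP where
  init := Path.root
  trans p := (M.trans p.last).image (SubProb.map p.extend)
  trans_nonempty p := (M.trans_nonempty p.last).image _
  label p := M.label p.last

variable {M}

theorem edge_treeUnfold_iff {p p' : M.Path} :
    M.treeUnfold.edge p p' ↔ ∃ a, p'.val = a :: p.val := by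
  constructor
  · rintro ⟨ν, hν, hpos⟩
    obtain ⟨μ, hμ, rfl⟩ := Finset.mem_image.mp hν
    obtain ⟨q, rfl, hq⟩ := (SubProb.pos_map_iff _ _ _).mp hpos
    exact ⟨_, Path.extend_val ⟨μ, hμ, hq⟩⟩
  · rintro ⟨a, ha⟩
    have hp' := p'.2
    rw [ha] at hp'
    obtain ⟨μ, hμ, hpos⟩ := hp'.1
    have hext : p.extend _ = p' :=
      Subtype.ext (by simpa [ha] using Path.extend_val ⟨μ, hμ, hpos⟩)
    exact ⟨μ.map p.extend, Finset.mem_image_of_mem _ hμ,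
      (SubProb.pos_map_iff _ _ _).mpr ⟨_, hext, hpos⟩⟩

theorem isTreeGraph_treeUnfold : IsTreeGraph M.treeUnfold.edge M.treeUnfold.init := by
  refine ⟨fun p h => ?_, fun p hp => ?_, fun p => ?_⟩
  · obtain ⟨a, ha⟩ := edge_treeUnfold_iff.mp h
    exact List.cons_ne_nil _ _ ha.symm
  · rcases p with ⟨_ | ⟨a, l⟩, hpath⟩
    · exact absurd rfl hp
    refine ⟨⟨l, hpath.2⟩, edge_treeUnfold_iff.mpr ⟨a, rfl⟩, fun r hr => ?_⟩
    obtain ⟨b, hb⟩ := edge_treeUnfold_iff.mp hr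
    exact Subtype.ext (List.cons.inj hb).2.symm
  · obtain ⟨l, hl⟩ := p
    induction l with
    | nil => exact .refl
    | cons a l ih => exact (ih hl.2).tail (edge_treeUnfold_iff.mpr ⟨a, rfl⟩)

theorem map_last_map_extend {p : M.Path} {μ : SubProb Q} (hμ : μ ∈ M.trans p.last) :
    (μ.map p.extend).map Path.last = μ := by
  conv_rhs => rw [← SubProb.map_id μ]
  rw [SubProb.map_map]
  exact SubProb.map_congr fun q hq =>
    Path.last_extend ⟨μ, hμ, lt_of_le_of_ne (μ.nonneg q) (Ne.symm hq)⟩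

theorem bisim_treeUnfold : M.Bisim M.treeUnfold := by
  refine bisim_of_map Path.last rfl (fun _ => rfl) fun p => ?_
  rw [treeUnfold, Finset.image_image]
  exact (Finset.image_congr fun μ hμ => map_last_map_extend hμ).trans Finset.image_id'

end MDP

/-- If the unlabeled underlying graph of an MDP is acyclic, then there is an MDP whose
unlabeled underlying graph is a tree which is bisimilar to it. -/
theorem stmt12 {Q : Type u} {AP : Type w} [Fintype Q] (M : MDP Q AP)
    (hacyc : ∀ x : Q, ¬ Relation.TransGen (MDP.edge M) x x) :
    ∃ (Q₂ : Type) (i : Fintype Q₂) (M₂ : @MDP Q₂ i AP),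
      IsTreeGraph (@MDP.edge Q₂ AP i M₂) M₂.init ∧
      @MDP.Bisim Q Q₂ AP _ i M M₂ := by
  have := M.finite_path hacyc
  let _ : Fintype M.Path := Fintype.ofFinite _
  exact ⟨M.Path, inferInstance, M.treeUnfold, M.isTreeGraph_treeUnfold,
    M.bisim_treeUnfold⟩
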